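/- arXiv:2401.04556 — 7 statements merged into one kernel-verified Lean document; each statement's English description precedes it below -/
import Mathlib

section
/- Well-posedness of the coupled SIV-opinion model: for every trajectory of the coupled SIV-opinion model satisfying the standing assumptions, all states remain in [0,1] for all times, i.e., for all i ∈ {1,…,n} and all k ≥ 0 one has x_i^I(k) ∈ [0,1], x_i^V(k) ∈ [0,1], o_i(k) ∈ [0,1], and x_i^I(k) + x_i^V(k) ≤ 1 (equivalently x_i^S(k) := 1 − x_i^I(k) − x_i^V(k) ∈ [0,1]). -/
/-- **Well-posedness of the coupled SIV-opinion model.**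
For every trajectory of the coupled SIV-opinion model satisfying the standing
assumptions, all states remain in `[0,1]` for all times, and
`x_i^I(k) + x_i^V(k) ≤ 1`. -/
theorem siv_opinion_well_posedness {n : ℕ} (c : ℝ) (hc : c ∈ Set.Ioo (0:ℝ) 1)
    (δ φ : Fin n → ℝ) (β w : Fin n → Fin n → ℝ)
    (θ γ : Fin n → ℝ → ℝ)
    (hδ : ∀ i, δ i ∈ Set.Icc (0:ℝ) 1)
    (hβ : ∀ i j, β i j ∈ Set.Icc (0:ℝ) 1)
    (hθ : ∀ i, ∀ o' ∈ Set.Icc (0:ℝ) 1, θ i o' ∈ Set.Icc (0:ℝ) 1)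
    (hγ : ∀ i, ∀ o' ∈ Set.Icc (0:ℝ) 1, γ i o' ∈ Set.Icc (0:ℝ) 1)
    (hβθ : ∀ i, ∀ o' ∈ Set.Icc (0:ℝ) 1, (∑ j, β i j) + θ i o' ≤ 1)
    (hθγ : ∀ i, ∀ o' ∈ Set.Icc (0:ℝ) 1, c ≤ θ i o' + γ i o')
    (hφ : ∀ i, φ i ∈ Set.Ioo (0:ℝ) 1)
    (hw : ∀ i j, 0 ≤ w i j) (hwrow : ∀ i, ∑ j, w i j = 1)
    (xI xV o : ℕ → Fin n → ℝ)
    (hI : ∀ k i, xI (k+1) i =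
      xI k i - δ i * xI k i + (1 - xI k i - xV k i) * ∑ j, β i j * xI k j)
    (hV : ∀ k i, xV (k+1) i =
      xV k i + δ i * xI k i - γ i (o k i) * xV k i
        + θ i (o k i) * (1 - xI k i - xV k i))
    (hO : ∀ k i, o (k+1) i =
      φ i * xI k i + (1 - φ i) * (o k i + (1 - o k i) * ∑ j, w i j * (o k j - o k i)))
    (hI0 : ∀ i, xI 0 i ∈ Set.Icc (0:ℝ) 1)
    (hV0 : ∀ i, xV 0 i ∈ Set.Icc (0:ℝ) 1)
    (hO0 : ∀ i, o 0 i ∈ Set.Icc (0:ℝ) 1)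
    (hIV0 : ∀ i, xI 0 i + xV 0 i ≤ 1) :
    ∀ k i, xI k i ∈ Set.Icc (0:ℝ) 1 ∧ xV k i ∈ Set.Icc (0:ℝ) 1 ∧
      o k i ∈ Set.Icc (0:ℝ) 1 ∧ xI k i + xV k i ≤ 1 := by
  intro k
  induction k with
  | zero => exact fun i => ⟨hI0 i, hV0 i, hO0 i, hIV0 i⟩
  | succ k ih =>
    intro i
    obtain ⟨hIk, hVk, hOk, hIVk⟩ := ih i
    have hθi := hθ i (o k i) hOk
    have hγi := hγ i (o k i) hOk
    have hβθi := hβθ i (o k i) hOk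
    have hδi := hδ i
    have hφi := hφ i
    have hs0 : (0:ℝ) ≤ 1 - xI k i - xV k i := by linarith
    have hSβ0 : (0:ℝ) ≤ ∑ j, β i j * xI k j :=
      Finset.sum_nonneg fun j _ => mul_nonneg (hβ i j).1 (ih j).1.1
    have hSβle : ∑ j, β i j * xI k j ≤ ∑ j, β i j :=
      Finset.sum_le_sum fun j _ => by
        nlinarith [(hβ i j).1, (hβ i j).2, (ih j).1.1, (ih j).1.2]
    have hβsum1 : ∑ j, β i j ≤ 1 := by linarith [hθi.1]
    have hS1 : ∑ j, β i j * xI k j ≤ 1 := hSβle.trans hβsum1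
    have hm0 : (0:ℝ) ≤ ∑ j, w i j * o k j :=
      Finset.sum_nonneg fun j _ => mul_nonneg (hw i j) (ih j).2.2.1.1
    have hm1 : ∑ j, w i j * o k j ≤ 1 := by
      calc ∑ j, w i j * o k j ≤ ∑ j, w i j :=
            Finset.sum_le_sum fun j _ => by
              nlinarith [hw i j, (ih j).2.2.1.1, (ih j).2.2.1.2]
        _ = 1 := hwrow i
    have hsplit : ∑ j, w i j * (o k j - o k i)
        = (∑ j, w i j * o k j) - o k i := by
      simp only [mul_sub]
      rw [Finset.sum_sub_distrib, ← Finset.sum_mul, hwrow i, one_mul]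
    -- bounds for xI at k+1
    have hIlo : 0 ≤ xI (k+1) i := by
      rw [hI k i]
      nlinarith [mul_nonneg hIk.1 (by linarith [hδi.2] : (0:ℝ) ≤ 1 - δ i),
        mul_nonneg hs0 hSβ0]
    have hIhi : xI (k+1) i ≤ 1 := by
      rw [hI k i]
      nlinarith [mul_le_of_le_one_right hs0 hS1, mul_nonneg hδi.1 hIk.1, hVk.1]
    -- sum bound
    have hIVsum : xI (k+1) i + xV (k+1) i ≤ 1 := by
      rw [hI k i, hV k i]
      nlinarith [mul_le_of_le_one_right hs0 (by linarith : (∑ j, β i j * xI k j) + θ i (o k i) ≤ 1),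
        mul_nonneg hγi.1 hVk.1]
    -- bounds for xV at k+1
    have hVlo : 0 ≤ xV (k+1) i := by
      rw [hV k i]
      nlinarith [mul_nonneg hVk.1 (by linarith [hγi.2] : (0:ℝ) ≤ 1 - γ i (o k i)),
        mul_nonneg hδi.1 hIk.1, mul_nonneg hθi.1 hs0]
    have hVhi : xV (k+1) i ≤ 1 := by linarith
    -- opinion bounds
    have hinner0 : 0 ≤ o k i + (1 - o k i) * ((∑ j, w i j * o k j) - o k i) := by
      nlinarith [mul_nonneg (by linarith [hOk.2] : (0:ℝ) ≤ 1 - o k i) hm0,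
        mul_self_nonneg (o k i)]
    have hinner1 : o k i + (1 - o k i) * ((∑ j, w i j * o k j) - o k i) ≤ 1 := by
      nlinarith [mul_nonneg (by linarith [hOk.2] : (0:ℝ) ≤ 1 - o k i)
        (by linarith [hOk.1] : (0:ℝ) ≤ 1 + o k i - ∑ j, w i j * o k j)]
    have hOlo : 0 ≤ o (k+1) i := by
      rw [hO k i, hsplit]
      nlinarith [mul_nonneg hφi.1.le hIk.1,
        mul_nonneg (by linarith [hφi.2] : (0:ℝ) ≤ 1 - φ i) hinner0]
    have hOhi : o (k+1) i ≤ 1 := by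
      rw [hO k i, hsplit]
      nlinarith [mul_le_of_le_one_right hφi.1.le hIk.2,
        mul_le_of_le_one_right (by linarith [hφi.2] : (0:ℝ) ≤ 1 - φ i) hinner1]
    exact ⟨⟨hIlo, hIhi⟩, ⟨hVlo, hVhi⟩, ⟨hOlo, hOhi⟩, hIVsum⟩
end

section
/- In the coupled SIV-opinion model, if the infected states converge to zero, i.e., x^I(k) → 0 as k → ∞, then the opinion states converge to zero: o(k) → 0 as k → ∞. -/
open Filter

/-- Auxiliary contraction lemma: if `0 ≤ u`, `u (k+1) ≤ a k + p * u k` with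
`0 ≤ p < 1` and `a → 0`, then `u → 0`. -/
lemma contract_aux (u a : ℕ → ℝ) (p : ℝ) (hp0 : 0 ≤ p) (hp1 : p < 1)
    (hu : ∀ k, 0 ≤ u k) (hrec : ∀ k, u (k+1) ≤ a k + p * u k)
    (ha : Tendsto a atTop (nhds 0)) : Tendsto u atTop (nhds 0) := by
  rw [Metric.tendsto_atTop] at ha ⊢
  intro ε hε
  have h1p : 0 < 1 - p := by linarith
  have hεp : 0 < ε * (1 - p) / 2 := by positivity
  obtain ⟨N, hN⟩ := ha (ε * (1 - p) / 2) hεp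
  have key : ∀ m, u (N + m) ≤ p ^ m * u N + ε / 2 := by
    intro m
    induction m with
    | zero => simp; linarith [hu N]
    | succ m ih =>
      have h1 := hrec (N + m)
      have h2 : a (N + m) < ε * (1 - p) / 2 := by
        have := hN (N + m) (Nat.le_add_right _ _)
        rw [Real.dist_eq, sub_zero] at this
        exact lt_of_le_of_lt (le_abs_self _) this
      have h3 : p * u (N + m) ≤ p * (p ^ m * u N + ε / 2) :=
        mul_le_mul_of_nonneg_left ih hp0
      have h4 : u (N + (m + 1)) = u (N + m + 1) := by ring_nf
      have h5 : ε * (1 - p) / 2 + p * (p ^ m * u N + ε / 2)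
          = p ^ (m + 1) * u N + ε / 2 := by ring
      rw [h4]
      linarith
  have hpow : Tendsto (fun m => p ^ m * u N) atTop (nhds 0) := by
    have := tendsto_pow_atTop_nhds_zero_of_lt_one hp0 hp1
    simpa using this.mul_const (u N)
  rw [Metric.tendsto_atTop] at hpow
  obtain ⟨M, hM⟩ := hpow (ε / 2) (by linarith)
  refine ⟨N + M, fun k hk => ?_⟩
  have hkN : N ≤ k := le_trans (Nat.le_add_right _ _) hk
  have hm : M ≤ k - N := by omega
  have hk' : N + (k - N) = k := by omega
  have h1 := key (k - N)
  have h2 := hM (k - N) hm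
  rw [Real.dist_eq, sub_zero] at h2
  have h3 : p ^ (k - N) * u N < ε / 2 := lt_of_le_of_lt (le_abs_self _) h2
  rw [hk'] at h1
  rw [Real.dist_eq, sub_zero, abs_of_nonneg (hu k)]
  linarith

/-- **Lemma 1.** In the coupled SIV-opinion model, if the infected states
converge to zero, then the opinion states converge to zero. -/
theorem opinions_vanish_of_infection_vanish {n : ℕ} (c : ℝ)
    (hc : c ∈ Set.Ioo (0:ℝ) 1)
    (δ φ : Fin n → ℝ) (β w : Fin n → Fin n → ℝ)
    (θ γ : Fin n → ℝ → ℝ)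
    (hδ : ∀ i, δ i ∈ Set.Icc (0:ℝ) 1)
    (hβ : ∀ i j, β i j ∈ Set.Icc (0:ℝ) 1)
    (hθ : ∀ i, ∀ o' ∈ Set.Icc (0:ℝ) 1, θ i o' ∈ Set.Icc (0:ℝ) 1)
    (hγ : ∀ i, ∀ o' ∈ Set.Icc (0:ℝ) 1, γ i o' ∈ Set.Icc (0:ℝ) 1)
    (hβθ : ∀ i, ∀ o' ∈ Set.Icc (0:ℝ) 1, (∑ j, β i j) + θ i o' ≤ 1)
    (hθγ : ∀ i, ∀ o' ∈ Set.Icc (0:ℝ) 1, c ≤ θ i o' + γ i o')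
    (hφ : ∀ i, φ i ∈ Set.Ioo (0:ℝ) 1)
    (hw : ∀ i j, 0 ≤ w i j) (hwrow : ∀ i, ∑ j, w i j = 1)
    (xI xV o : ℕ → Fin n → ℝ)
    (hI : ∀ k i, xI (k+1) i =
      xI k i - δ i * xI k i + (1 - xI k i - xV k i) * ∑ j, β i j * xI k j)
    (hV : ∀ k i, xV (k+1) i =
      xV k i + δ i * xI k i - γ i (o k i) * xV k i
        + θ i (o k i) * (1 - xI k i - xV k i))
    (hO : ∀ k i, o (k+1) i =
      φ i * xI k i + (1 - φ i) * (o k i + (1 - o k i) * ∑ j, w i j * (o k j - o k i)))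
    (hI0 : ∀ i, xI 0 i ∈ Set.Icc (0:ℝ) 1)
    (hV0 : ∀ i, xV 0 i ∈ Set.Icc (0:ℝ) 1)
    (hO0 : ∀ i, o 0 i ∈ Set.Icc (0:ℝ) 1)
    (hIV0 : ∀ i, xI 0 i + xV 0 i ≤ 1)
    (hconv : Tendsto (fun k => xI k) atTop (nhds 0)) :
    Tendsto (fun k => o k) atTop (nhds 0) := by
  rcases Nat.eq_zero_or_pos n with hn | hn
  · subst hn
    have h : (fun k => o k) = fun _ => (0 : Fin 0 → ℝ) :=
      funext fun k => Subsingleton.elim _ _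
    rw [h]; exact tendsto_const_nhds
  haveI : Nonempty (Fin n) := Fin.pos_iff_nonempty.mp hn
  -- rewrite the opinion dynamics
  have hwsum : ∀ k i, ∑ j, w i j * (o k j - o k i)
      = (∑ j, w i j * o k j) - o k i := by
    intro k i
    simp only [mul_sub, Finset.sum_sub_distrib, ← Finset.sum_mul, hwrow, one_mul]
  -- the invariant set
  have inv : ∀ k, (∀ i, 0 ≤ xI k i) ∧ (∀ i, 0 ≤ xV k i) ∧
      (∀ i, xI k i + xV k i ≤ 1) ∧ (∀ i, 0 ≤ o k i ∧ o k i ≤ 1) := by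
    intro k
    induction k with
    | zero => exact ⟨fun i => (hI0 i).1, fun i => (hV0 i).1, hIV0, hO0⟩
    | succ k ih =>
      obtain ⟨ihI, ihV, ihIV, ihO⟩ := ih
      have hI1 : ∀ i, xI k i ≤ 1 := fun i => by
        have h1 := ihIV i; have h2 := ihV i; linarith
      have hS0 : ∀ i, 0 ≤ ∑ j, β i j * xI k j := fun i =>
        Finset.sum_nonneg fun j _ => mul_nonneg (hβ i j).1 (ihI j)
      have hS1 : ∀ i, ∑ j, β i j * xI k j ≤ ∑ j, β i j := fun i =>
        Finset.sum_le_sum fun j _ => mul_le_of_le_one_right (hβ i j).1 (hI1 j)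
      have hOmem : ∀ i, o k i ∈ Set.Icc (0:ℝ) 1 := fun i => ⟨(ihO i).1, (ihO i).2⟩
      have hSθ : ∀ i, (∑ j, β i j * xI k j) + θ i (o k i) ≤ 1 := fun i => by
        have := hβθ i (o k i) (hOmem i)
        linarith [hS1 i]
      have hT0 : ∀ i, 0 ≤ ∑ j, w i j * o k j := fun i =>
        Finset.sum_nonneg fun j _ => mul_nonneg (hw i j) (ihO j).1
      have hT1 : ∀ i, ∑ j, w i j * o k j ≤ 1 := fun i => by
        have : ∑ j, w i j * o k j ≤ ∑ j, w i j :=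
          Finset.sum_le_sum fun j _ => mul_le_of_le_one_right (hw i j) (ihO j).2
        rw [hwrow i] at this; exact this
      refine ⟨?_, ?_, ?_, ?_⟩
      · intro i
        rw [hI k i]
        have h1 := ihI i; have h2 := ihIV i; have h3 := ihV i
        have hδi := hδ i
        nlinarith [mul_nonneg h1 (sub_nonneg.2 hδi.2),
          mul_nonneg (show (0:ℝ) ≤ 1 - xI k i - xV k i by linarith) (hS0 i)]
      · intro i
        rw [hV k i]
        have h1 := ihI i; have h2 := ihIV i; have h3 := ihV i
        have hγi := hγ i (o k i) (hOmem i)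
        have hθi := hθ i (o k i) (hOmem i)
        have hδi := hδ i
        nlinarith [mul_nonneg h3 (sub_nonneg.2 hγi.2),
          mul_nonneg hδi.1 h1,
          mul_nonneg hθi.1 (show (0:ℝ) ≤ 1 - xI k i - xV k i by linarith)]
      · intro i
        rw [hI k i, hV k i]
        have h1 := ihI i; have h2 := ihIV i; have h3 := ihV i
        have hγi := hγ i (o k i) (hOmem i)
        have hnn : (0:ℝ) ≤ 1 - xI k i - xV k i := by linarith
        nlinarith [mul_le_mul_of_nonneg_left (hSθ i) hnn,
          mul_nonneg hγi.1 h3]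
      · intro i
        rw [hO k i, hwsum k i]
        have h1 := ihI i; have hxI1 := hI1 i
        have ho0 := (ihO i).1; have ho1 := (ihO i).2
        have hφi := hφ i
        have hinner0 : 0 ≤ o k i + (1 - o k i) * ((∑ j, w i j * o k j) - o k i) := by
          nlinarith [mul_nonneg (show (0:ℝ) ≤ 1 - o k i by linarith) (hT0 i),
            sq_nonneg (o k i)]
        have hinner1 : o k i + (1 - o k i) * ((∑ j, w i j * o k j) - o k i) ≤ 1 := by
          nlinarith [mul_le_mul_of_nonneg_left (hT1 i)
              (show (0:ℝ) ≤ 1 - o k i by linarith),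
            mul_nonneg ho0 (show (0:ℝ) ≤ 1 - o k i by linarith)]
        constructor
        · nlinarith [mul_nonneg hφi.1.le h1,
            mul_nonneg (show (0:ℝ) ≤ 1 - φ i by linarith [hφi.2]) hinner0]
        · nlinarith [mul_le_mul_of_nonneg_left hxI1 hφi.1.le,
            mul_le_mul_of_nonneg_left hinner1
              (show (0:ℝ) ≤ 1 - φ i by linarith [hφi.2])]
  -- the max opinion
  set M : ℕ → ℝ := fun k => Finset.univ.sup' Finset.univ_nonempty (fun i => o k i)
    with hMdef
  have hMle : ∀ k i, o k i ≤ M k := fun k i =>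
    Finset.le_sup' _ (Finset.mem_univ i)
  have hM0 : ∀ k, 0 ≤ M k := fun k => by
    obtain ⟨i0⟩ := (inferInstance : Nonempty (Fin n))
    exact le_trans ((inv k).2.2.2 i0).1 (hMle k i0)
  -- the driving term
  set A : ℕ → ℝ := fun k => ∑ i, xI k i with hAdef
  have hAub : ∀ k i, xI k i ≤ A k := fun k i =>
    Finset.single_le_sum (fun j _ => (inv k).1 j) (Finset.mem_univ i)
  -- the contraction factor
  set p : ℝ := 1 - Finset.univ.inf' Finset.univ_nonempty φ with hpdef
  have hφmin : ∀ i, Finset.univ.inf' Finset.univ_nonempty φ ≤ φ i := fun i =>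
    Finset.inf'_le _ (Finset.mem_univ i)
  have hp1 : p < 1 := by
    have : (0:ℝ) < Finset.univ.inf' Finset.univ_nonempty φ :=
      (Finset.lt_inf'_iff _).2 fun i _ => (hφ i).1
    simp only [hpdef]; linarith
  have hp0 : 0 ≤ p := by
    obtain ⟨i0⟩ := (inferInstance : Nonempty (Fin n))
    have h1 := hφmin i0
    have h2 := (hφ i0).2
    simp only [hpdef]; linarith
  -- key recursion
  have hkey : ∀ k, M (k + 1) ≤ A k + p * M k := by
    intro k
    apply Finset.sup'_le
    intro i _
    rw [hO k i, hwsum k i]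
    have ho0 := ((inv k).2.2.2 i).1
    have hMi := hMle k i
    have hφi := hφ i
    have hTM : ∑ j, w i j * o k j ≤ M k := by
      have h1 : ∑ j, w i j * o k j ≤ ∑ j, w i j * M k :=
        Finset.sum_le_sum fun j _ => mul_le_mul_of_nonneg_left (hMle k j) (hw i j)
      rwa [← Finset.sum_mul, hwrow i, one_mul] at h1
    have hinnerM : o k i + (1 - o k i) * ((∑ j, w i j * o k j) - o k i) ≤ M k := by
      nlinarith [mul_le_mul_of_nonneg_left
          (show (∑ j, w i j * o k j) - o k i ≤ M k - o k i by linarith)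
          (show (0:ℝ) ≤ 1 - o k i by linarith [((inv k).2.2.2 i).2]),
        mul_nonneg ho0 (show (0:ℝ) ≤ M k - o k i by linarith)]
    have h1 : φ i * xI k i ≤ A k := by
      have := mul_le_of_le_one_left ((inv k).1 i) hφi.2.le
      linarith [hAub k i]
    have h2 : (1 - φ i) * (o k i + (1 - o k i) * ((∑ j, w i j * o k j) - o k i))
        ≤ p * M k := by
      have h3 : (1 - φ i) * (o k i + (1 - o k i) * ((∑ j, w i j * o k j) - o k i))
          ≤ (1 - φ i) * M k :=
        mul_le_mul_of_nonneg_left hinnerM (by linarith [hφi.2])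
      have h4 : (1 - φ i) * M k ≤ p * M k :=
        mul_le_mul_of_nonneg_right (by simp only [hpdef]; linarith [hφmin i]) (hM0 k)
      linarith
    linarith
  -- A tends to zero
  have hx : ∀ i, Tendsto (fun k => xI k i) atTop (nhds 0) := by
    intro i
    have := tendsto_pi_nhds.mp hconv i
    simpa using this
  have hA : Tendsto A atTop (nhds 0) := by
    have := tendsto_finset_sum (Finset.univ : Finset (Fin n)) fun i _ => hx i
    simpa [hAdef] using this
  -- conclude
  have hMtend : Tendsto M atTop (nhds 0) := by
    refine contract_aux M A p hp0 hp1 hM0 hkey hA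
  rw [tendsto_pi_nhds]
  intro i
  have := squeeze_zero (fun k => ((inv k).2.2.2 i).1) (fun k => hMle k i) hMtend
  simpa using this
end

section
/- Necessary condition for consensus-endemic equilibria: suppose Σ_{j=1}^n β_{ij} > 0 for all i. If (x^I*, x^V*, o*) is a fixed point of the coupled SIV-opinion model with x^I* ≠ 0 and o* = a·1_n for some a (a consensus-endemic equilibrium), with all components of x^I*, x^V*, o* in [0,1], then a ∈ (0,1] and, for every i ∈ {1,…,n}, δ_i = (1 − a − θ_i(a)(1−a)/(γ_i(a) + θ_i(a))) / ( a/(γ_i(a) + θ_i(a)) + 1/(Σ_{j=1}^n β_{ij}) ). -/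
/-!
At a consensus `o* = a·1ₙ` the diffusion term of the opinion update vanishes, so the opinion
equation reads `a = φᵢ xᵢ^I + (1 - φᵢ) a`, forcing `xᵢ^I = a` at every node; `x^I ≠ 0` then
gives `a > 0`. With `x^I = a·1ₙ` the infection equation becomes `δᵢ = (1 - a - xᵢ^V) Σⱼ βᵢⱼ`
and the vaccination equation `xᵢ^V (γᵢ + θᵢ) = δᵢ a + θᵢ (1 - a)`; eliminating `xᵢ^V` leaves
a linear equation for `δᵢ` whose coefficient `a / (γᵢ + θᵢ) + 1 / Σⱼ βᵢⱼ` is positive.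
-/

theorem eq_of_opinion_fixed_point_of_consensus {ι : Type*} [Fintype ι] {φ x a : ℝ}
    (w : ι → ℝ) (hφ : φ ≠ 0)
    (h : a = φ * x + (1 - φ) * (a + (1 - a) * ∑ j, w j * (a - a))) :
    x = a := by
  simp only [sub_self, mul_zero, Finset.sum_const_zero, add_zero] at h
  exact mul_left_cancel₀ hφ (by linear_combination -h)

theorem recovery_rate_eq_of_fixed_point {δ γ θ a xV B : ℝ}
    (ha : 0 < a) (hB : 0 < B) (hG : 0 < γ + θ)
    (hI : a = a - δ * a + (1 - a - xV) * (B * a))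
    (hV : xV = xV + δ * a - γ * xV + θ * (1 - a - xV)) :
    δ = (1 - a - θ * (1 - a) / (γ + θ)) / (a / (γ + θ) + 1 / B) := by
  have hδ : δ = (1 - a - xV) * B :=
    mul_right_cancel₀ ha.ne' (by linear_combination hI)
  have hxV : xV * (γ + θ) = δ * a + θ * (1 - a) := by linear_combination hV
  have hden : 0 < a / (γ + θ) + 1 / B := by positivity
  rw [eq_div_iff hden.ne']
  field_simp
  linear_combination (γ + θ) * hδ - B * hxV

theorem consensus_endemic_necessary_condition_general {n : ℕ} (c : ℝ)
    (hc : c ∈ Set.Ioo (0:ℝ) 1)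
    (δ φ : Fin n → ℝ) (β w : Fin n → Fin n → ℝ)
    (θ γ : Fin n → ℝ → ℝ)
    (hβpos : ∀ i, 0 < ∑ j, β i j)
    (hθγ : ∀ i, ∀ o' ∈ Set.Icc (0:ℝ) 1, c ≤ θ i o' + γ i o')
    (hφ : ∀ i, φ i ∈ Set.Ioo (0:ℝ) 1)
    (xI xV o : Fin n → ℝ) (a : ℝ)
    (hor : ∀ i, o i ∈ Set.Icc (0:ℝ) 1)
    -- `(xI, xV, o)` is a fixed point of the update equations:
    (hI : ∀ i, xI i =
      xI i - δ i * xI i + (1 - xI i - xV i) * ∑ j, β i j * xI j)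
    (hV : ∀ i, xV i =
      xV i + δ i * xI i - γ i (o i) * xV i + θ i (o i) * (1 - xI i - xV i))
    (hO : ∀ i, o i =
      φ i * xI i + (1 - φ i) * (o i + (1 - o i) * ∑ j, w i j * (o j - o i)))
    -- endemic with consensus opinions:
    (hend : xI ≠ 0) (hcons : ∀ i, o i = a) :
    a ∈ Set.Ioc (0:ℝ) 1 ∧
    ∀ i, δ i = (1 - a - θ i a * (1 - a) / (γ i a + θ i a)) /
      (a / (γ i a + θ i a) + 1 / ∑ j, β i j) := by
  obtain ⟨i₀, hi₀⟩ : ∃ i, xI i ≠ 0 := Function.ne_iff.mp hend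
  have ha01 : a ∈ Set.Icc (0:ℝ) 1 := hcons i₀ ▸ hor i₀
  have hxI : ∀ i, xI i = a := fun i =>
    eq_of_opinion_fixed_point_of_consensus (w i) (hφ i).1.ne' (by simpa only [hcons] using hO i)
  have ha : 0 < a := ha01.1.lt_of_ne (hxI i₀ ▸ hi₀).symm
  refine ⟨⟨ha, ha01.2⟩, fun i =>
    recovery_rate_eq_of_fixed_point (xV := xV i) ha (hβpos i) ?_ ?_ ?_⟩
  · linarith [hθγ i a ha01, hc.1]
  · simpa only [hxI, ← Finset.sum_mul] using hI i
  · simpa only [hcons, hxI] using hV i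

/-- **Proposition 2 (necessary condition for consensus-endemic equilibria).**
If `(x^I*, x^V*, o*)` is a fixed point of the coupled SIV-opinion model with
`x^I* ≠ 0` and `o* = a·1ₙ`, with all components in `[0,1]`, then `a ∈ (0,1]`
and `δ_i` satisfies the relation (13) of the paper for every `i`. -/
theorem consensus_endemic_necessary_condition {n : ℕ} (c : ℝ)
    (hc : c ∈ Set.Ioo (0:ℝ) 1)
    (δ φ : Fin n → ℝ) (β w : Fin n → Fin n → ℝ)
    (θ γ : Fin n → ℝ → ℝ)
    (hδ : ∀ i, δ i ∈ Set.Icc (0:ℝ) 1)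
    (hβ : ∀ i j, β i j ∈ Set.Icc (0:ℝ) 1)
    (hβpos : ∀ i, 0 < ∑ j, β i j)
    (hθ : ∀ i, ∀ o' ∈ Set.Icc (0:ℝ) 1, θ i o' ∈ Set.Icc (0:ℝ) 1)
    (hγ : ∀ i, ∀ o' ∈ Set.Icc (0:ℝ) 1, γ i o' ∈ Set.Icc (0:ℝ) 1)
    (hθγ : ∀ i, ∀ o' ∈ Set.Icc (0:ℝ) 1, c ≤ θ i o' + γ i o')
    (hφ : ∀ i, φ i ∈ Set.Ioo (0:ℝ) 1)
    (hw : ∀ i j, 0 ≤ w i j) (hwrow : ∀ i, ∑ j, w i j = 1)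
    (xI xV o : Fin n → ℝ) (a : ℝ)
    (hxIr : ∀ i, xI i ∈ Set.Icc (0:ℝ) 1)
    (hxVr : ∀ i, xV i ∈ Set.Icc (0:ℝ) 1)
    (hor : ∀ i, o i ∈ Set.Icc (0:ℝ) 1)
    -- `(xI, xV, o)` is a fixed point of the update equations:
    (hI : ∀ i, xI i =
      xI i - δ i * xI i + (1 - xI i - xV i) * ∑ j, β i j * xI j)
    (hV : ∀ i, xV i =
      xV i + δ i * xI i - γ i (o i) * xV i + θ i (o i) * (1 - xI i - xV i))
    (hO : ∀ i, o i =
      φ i * xI i + (1 - φ i) * (o i + (1 - o i) * ∑ j, w i j * (o j - o i)))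
    -- endemic with consensus opinions:
    (hend : xI ≠ 0) (hcons : ∀ i, o i = a) :
    a ∈ Set.Ioc (0:ℝ) 1 ∧
    ∀ i, δ i = (1 - a - θ i a * (1 - a) / (γ i a + θ i a)) /
      (a / (γ i a + θ i a) + 1 / ∑ j, β i j) :=
  consensus_endemic_necessary_condition_general c hc δ φ β w θ γ hβpos hθγ hφ xI xV o a hor hI hV hO
    hend hcons
end

section
/- Strict positivity at endemic equilibria: suppose the matrix B = [β_{ij}] is irreducible, δ_i ∈ (0,1] for all i, and γ_i(o) > 0 for all o ∈ [0,1] and all i. If (x^I*, x^V*, o*) is a fixed point of the coupled SIV-opinion model with x_i^I*, x_i^V*, o_i* ∈ [0,1] and x_i^I* + x_i^V* ≤ 1 for all i, and x^I* ≠ 0, then x_i^I* > 0, x_i^V* > 0, and o_i* > 0 for every i ∈ {1,…,n}. -/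
/-- **Corollary 1 (strict positivity at endemic equilibria).**
Suppose `B = [β_{ij}]` is irreducible (its directed graph, with an edge
`j → i` whenever `β_{ij} > 0`, is strongly connected), `δ_i ∈ (0,1]`, and
`γ_i(o) > 0` on `[0,1]`. If `(x^I*, x^V*, o*)` is a fixed point of the
coupled SIV-opinion model with components in `[0,1]`, `x_i^I* + x_i^V* ≤ 1`
and `x^I* ≠ 0`, then `x_i^I* > 0`, `x_i^V* > 0` and `o_i* > 0` for all `i`. -/
theorem endemic_equilibrium_strict_positivity {n : ℕ} (c : ℝ)
    (hc : c ∈ Set.Ioo (0:ℝ) 1)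
    (δ φ : Fin n → ℝ) (β w : Fin n → Fin n → ℝ)
    (θ γ : Fin n → ℝ → ℝ)
    (hδ : ∀ i, δ i ∈ Set.Ioc (0:ℝ) 1)
    (hβ : ∀ i j, β i j ∈ Set.Icc (0:ℝ) 1)
    -- irreducibility of `B`: strong connectivity of the associated digraph
    (hirr : ∀ i j : Fin n, i ≠ j →
      Relation.TransGen (fun p q => 0 < β q p) i j)
    (hθ : ∀ i, ∀ o' ∈ Set.Icc (0:ℝ) 1, θ i o' ∈ Set.Icc (0:ℝ) 1)
    (hγ : ∀ i, ∀ o' ∈ Set.Icc (0:ℝ) 1, γ i o' ∈ Set.Icc (0:ℝ) 1)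
    (hγpos : ∀ i, ∀ o' ∈ Set.Icc (0:ℝ) 1, 0 < γ i o')
    (hθγ : ∀ i, ∀ o' ∈ Set.Icc (0:ℝ) 1, c ≤ θ i o' + γ i o')
    (hφ : ∀ i, φ i ∈ Set.Ioo (0:ℝ) 1)
    (hw : ∀ i j, 0 ≤ w i j) (hwrow : ∀ i, ∑ j, w i j = 1)
    (xI xV o : Fin n → ℝ)
    (hxIr : ∀ i, xI i ∈ Set.Icc (0:ℝ) 1)
    (hxVr : ∀ i, xV i ∈ Set.Icc (0:ℝ) 1)
    (hor : ∀ i, o i ∈ Set.Icc (0:ℝ) 1)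
    (hIV : ∀ i, xI i + xV i ≤ 1)
    -- `(xI, xV, o)` is a fixed point of the update equations:
    (hI : ∀ i, xI i =
      xI i - δ i * xI i + (1 - xI i - xV i) * ∑ j, β i j * xI j)
    (hV : ∀ i, xV i =
      xV i + δ i * xI i - γ i (o i) * xV i + θ i (o i) * (1 - xI i - xV i))
    (hO : ∀ i, o i =
      φ i * xI i + (1 - φ i) * (o i + (1 - o i) * ∑ j, w i j * (o j - o i)))
    (hend : xI ≠ 0) :
    ∀ i, 0 < xI i ∧ 0 < xV i ∧ 0 < o i := by
  have hSnn : ∀ i, 0 ≤ ∑ j, β i j * xI j := by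
    intro i
    exact Finset.sum_nonneg fun j _ => mul_nonneg (hβ i j).1 (hxIr j).1
  have hA : ∀ i, δ i * xI i = (1 - xI i - xV i) * ∑ j, β i j * xI j := by
    intro i; linarith [hI i]
  have hprop : ∀ p q : Fin n, 0 < β q p → 0 < xI p → 0 < xI q := by
    intro p q hb hp
    by_contra h
    have hq0 : xI q = 0 := le_antisymm (not_lt.mp h) (hxIr q).1
    have hVlt : xV q < 1 := by
      rcases lt_or_eq_of_le (hxVr q).2 with h1 | h1
      · exact h1
      · exfalso
        have hVq := hV q
        have hg := hγpos q (o q) (hor q)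
        rw [hq0, h1] at hVq
        nlinarith
    have hS : 0 < ∑ j, β q j * xI j := by
      have hle : β q p * xI p ≤ ∑ j, β q j * xI j := by
        apply Finset.single_le_sum (f := fun j => β q j * xI j)
        · intro j _; exact mul_nonneg (hβ q j).1 (hxIr j).1
        · exact Finset.mem_univ p
      nlinarith [mul_pos hb hp]
    have hAq := hA q
    rw [hq0] at hAq
    nlinarith
  obtain ⟨j0, hj0⟩ : ∃ j, 0 < xI j := by
    by_contra h
    push_neg at h
    exact hend (funext fun j => le_antisymm (h j) (hxIr j).1)
  have hIpos : ∀ i, 0 < xI i := by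
    intro i
    by_cases hij : i = j0
    · rw [hij]; exact hj0
    · have ht := hirr j0 i (Ne.symm hij)
      clear hij
      induction ht with
      | single h => exact hprop _ _ h hj0
      | tail _ h ih => exact hprop _ _ h ih
  intro i
  refine ⟨hIpos i, ?_, ?_⟩
  · have hg := hγpos i (o i) (hor i)
    have hθnn := (hθ i (o i) (hor i)).1
    have hfrac : 0 < 1 - xI i - xV i := by
      have hA' := hA i
      have hS := hSnn i
      nlinarith [mul_pos (hδ i).1 (hIpos i)]
    have hgv : 0 < γ i (o i) * xV i := by
      have hVi := hV i
      nlinarith [mul_pos (hδ i).1 (hIpos i), mul_nonneg hθnn hfrac.le]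
    nlinarith [(hγ i (o i) (hor i)).2]
  · by_contra h
    have ho0 : o i = 0 := le_antisymm (not_lt.mp h) (hor i).1
    have hs : 0 ≤ ∑ j, w i j * (o j - o i) := by
      apply Finset.sum_nonneg
      intro j _
      rw [ho0, sub_zero]
      exact mul_nonneg (hw i j) (hor j).1
    have hO' := hO i
    rw [ho0] at hO' hs
    have h1 := (hφ i).1
    have h2 := (hφ i).2
    nlinarith [mul_pos h1 (hIpos i),
      mul_nonneg (by linarith : (0:ℝ) ≤ 1 - φ i) hs]
end

section
/- Uniform contraction of the perturbed opinion error map: let W ∈ ℝ^{n×n} be entrywise nonnegative and row-stochastic, let φ_i ∈ (0,1) for all i, let Φ = diag(φ_1,…,φ_n), and let v ∈ ℝ^n satisfy −2 w_{ii} − φ_i/(1 − φ_i) < v_i < φ_i/(1 − φ_i) for all i. Then for every o ∈ [0,1]^n, ‖(I_n − Φ) ( (I_n − diag(o)) W + diag(o) + diag(v) )‖_∞ < 1. -/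
/-- The matrix norm induced by the vector infinity norm: the maximum absolute
row sum of the matrix. -/
noncomputable def infNorm {n : ℕ} (A : Matrix (Fin n) (Fin n) ℝ) : ℝ :=
  ⨆ i, ∑ j, |A i j|

/-- **Uniform contraction of the perturbed opinion error map.**
If `W` is entrywise nonnegative row-stochastic, `φ_i ∈ (0,1)`, and
`−2w_{ii} − φ_i/(1−φ_i) < v_i < φ_i/(1−φ_i)` for all `i`, then for every
`o ∈ [0,1]^n`,
`‖(Iₙ − Φ)((Iₙ − diag(o))W + diag(o) + diag(v))‖_∞ < 1`. -/
theorem opinion_error_map_contraction {n : ℕ}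
    (W : Matrix (Fin n) (Fin n) ℝ)
    (hW : ∀ i j, 0 ≤ W i j) (hWrow : ∀ i, ∑ j, W i j = 1)
    (φ : Fin n → ℝ) (hφ : ∀ i, φ i ∈ Set.Ioo (0:ℝ) 1)
    (v : Fin n → ℝ)
    (hv : ∀ i, -2 * W i i - φ i / (1 - φ i) < v i ∧ v i < φ i / (1 - φ i)) :
    ∀ o : Fin n → ℝ, (∀ i, o i ∈ Set.Icc (0:ℝ) 1) →
      infNorm ((1 - Matrix.diagonal φ) *
        ((1 - Matrix.diagonal o) * W + Matrix.diagonal o + Matrix.diagonal v))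
        < 1 := by
  intro o ho
  set M := (1 - Matrix.diagonal φ) *
      ((1 - Matrix.diagonal o) * W + Matrix.diagonal o + Matrix.diagonal v) with hM
  have key : ∀ i, ∑ j, |M i j| < 1 := by
    intro i
    have hp := hφ i
    have hp1 : 0 < 1 - φ i := by linarith [hp.2]
    have hoi := ho i
    have hWii : W i i ≤ 1 := by
      rw [← hWrow i]
      exact Finset.single_le_sum (fun j _ => hW i j) (Finset.mem_univ i)
    have hv1 : (1 - φ i) * v i < φ i := by
      have := (hv i).2
      rw [lt_div_iff₀ hp1] at this
      linarith [this]
    have hv2 : (1 - φ i) * (-(v i) - 2 * W i i) < φ i := by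
      have := (hv i).1
      have h2 : -(v i) - 2 * W i i < φ i / (1 - φ i) := by linarith
      rw [div_eq_mul_inv] at h2
      have := (lt_div_iff₀ hp1).mp (by rw [div_eq_mul_inv]; exact h2)
      linarith [this]
    have entry : ∀ j, M i j
        = (1 - φ i) * ((1 - o i) * W i j + (if i = j then o i + v i else 0)) := by
      intro j
      have h1 : (1 - Matrix.diagonal φ) = Matrix.diagonal (fun k => 1 - φ k) := by
        rw [← Matrix.diagonal_one, ← Matrix.diagonal_sub]
      rw [hM, h1, Matrix.diagonal_mul]
      simp [Matrix.add_apply, Matrix.sub_mul, Matrix.sub_apply, Matrix.diagonal_mul,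
        Matrix.diagonal_apply]
      by_cases h : i = j <;> simp [h] <;> try ring
      all_goals tauto
    have habs : ∀ j, |M i j| = (1 - φ i) * |(1 - o i) * W i j + (if i = j then o i + v i else 0)| := by
      intro j
      rw [entry j, abs_mul, abs_of_pos hp1]
    have hsplit : ∑ j, |M i j|
        = (1 - φ i) * ((∑ j ∈ Finset.univ.erase i, (1 - o i) * W i j)
            + |(1 - o i) * W i i + (o i + v i)|) := by
      rw [Finset.sum_congr rfl (fun j _ => habs j), ← Finset.mul_sum]
      congr 1
      rw [← Finset.sum_erase_add _ _ (Finset.mem_univ i)]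
      congr 1
      · exact Finset.sum_congr rfl (fun j hj => by
          have hji : i ≠ j := fun h => (Finset.ne_of_mem_erase hj) h.symm
          rw [if_neg hji, add_zero]
          exact abs_of_nonneg (mul_nonneg (by linarith [hoi.2]) (hW i j)))
      · simp
    have hrest : ∑ j ∈ Finset.univ.erase i, (1 - o i) * W i j
        = (1 - o i) * (1 - W i i) := by
      rw [← Finset.mul_sum]
      congr 1
      have := Finset.sum_erase_add Finset.univ (fun j => W i j) (Finset.mem_univ i)
      rw [hWrow i] at this
      linarith
    rw [hsplit, hrest]
    rcases le_or_gt 0 ((1 - o i) * W i i + (o i + v i)) with hc | hc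
    · rw [abs_of_nonneg hc]
      nlinarith [hoi.1, hoi.2, hW i i, hp.1]
    · rw [abs_of_neg hc]
      nlinarith [hoi.1, hoi.2, hW i i, hp.1,
        mul_nonneg hp1.le (mul_nonneg hoi.1 (by linarith : (0:ℝ) ≤ 1 - W i i))]
  unfold infNorm
  rcases isEmpty_or_nonempty (Fin n) with he | hne
  · simp [Real.iSup_of_isEmpty]
  · obtain ⟨i0, hmax⟩ := Finite.exists_max (fun i => ∑ j, |M i j|)
    exact lt_of_le_of_lt (ciSup_le hmax) (key i0)
end

section
/- Uniform contraction of the infected-error map: let B = [β_{ij}] ∈ ℝ^{n×n} with β_{ij} ∈ [0,1], let Δ = diag(δ_1,…,δ_n) with δ_i ∈ [0,1], and let y ∈ [0,1]^n. Suppose that for every i, Σ_{j=1}^n β_{ij} < δ_i + (B y)_i < 2 − Σ_{j=1}^n β_{ij} + 2β_{ii} and δ_i + (B y)_i < 2. Then for every s ∈ [0,1]^n, ‖I_n − Δ − diag(B y) + diag(s) B‖_∞ < 1. -/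
/-- **Uniform contraction of the infected-error map.**
Let `B = [β_{ij}]` with `β_{ij} ∈ [0,1]`, `Δ = diag(δ)` with `δ_i ∈ [0,1]`,
and `y ∈ [0,1]^n`. If for every `i`,
`Σ_j β_{ij} < δ_i + (By)_i < 2 − Σ_j β_{ij} + 2β_{ii}` and `δ_i + (By)_i < 2`,
then for every `s ∈ [0,1]^n`,
`‖Iₙ − Δ − diag(By) + diag(s)B‖_∞ < 1`. -/
theorem infected_error_map_contraction {n : ℕ}
    (β : Fin n → Fin n → ℝ) (hβ : ∀ i j, β i j ∈ Set.Icc (0:ℝ) 1)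
    (δ : Fin n → ℝ) (hδ : ∀ i, δ i ∈ Set.Icc (0:ℝ) 1)
    (y : Fin n → ℝ) (hy : ∀ i, y i ∈ Set.Icc (0:ℝ) 1)
    (hcond : ∀ i, (∑ j, β i j) < δ i + (Matrix.of β).mulVec y i ∧
      δ i + (Matrix.of β).mulVec y i < 2 - (∑ j, β i j) + 2 * β i i ∧
      δ i + (Matrix.of β).mulVec y i < 2) :
    ∀ s : Fin n → ℝ, (∀ i, s i ∈ Set.Icc (0:ℝ) 1) →
      infNorm (1 - Matrix.diagonal δ
        - Matrix.diagonal ((Matrix.of β).mulVec y)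
        + Matrix.diagonal s * Matrix.of β) < 1 := by
  intro s hs
  set M := 1 - Matrix.diagonal δ - Matrix.diagonal ((Matrix.of β).mulVec y)
      + Matrix.diagonal s * Matrix.of β with hM
  have key : ∀ i, (∑ j, |M i j|) < 1 := by
    intro i
    obtain ⟨h1, h2, h3⟩ := hcond i
    set a := δ i + (Matrix.of β).mulVec y i with ha
    set R := ∑ j, β i j with hR
    have hA : ∀ j, M i j = (if i = j then 1 - a else 0) + s i * β i j := by
      intro j
      by_cases hij : i = j <;>
        simp [hM, Matrix.sub_apply, Matrix.add_apply, Matrix.one_apply,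
          Matrix.diagonal_apply, Matrix.diagonal_mul, hij, ha] <;> ring
    have hs0 := (hs i).1
    have hs1 := (hs i).2
    have hbii0 := (hβ i i).1
    have hoff : ∀ j ∈ Finset.univ.erase i, |M i j| = s i * β i j := by
      intro j hj
      rw [hA j, if_neg (Finset.ne_of_mem_erase hj).symm, zero_add,
        abs_of_nonneg (mul_nonneg hs0 (hβ i j).1)]
    have hsplit : (∑ j, |M i j|)
        = |1 - a + s i * β i i| + ∑ j ∈ Finset.univ.erase i, s i * β i j := by
      rw [← Finset.add_sum_erase _ _ (Finset.mem_univ i),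
        Finset.sum_congr rfl hoff, hA i, if_pos rfl]
    have hSval : ∑ j ∈ Finset.univ.erase i, s i * β i j = s i * (R - β i i) := by
      rw [← Finset.mul_sum, hR, ← Finset.add_sum_erase _ _ (Finset.mem_univ i)]
      ring
    have hRbii : 0 ≤ R - β i i := by
      rw [hR, ← Finset.add_sum_erase _ _ (Finset.mem_univ i)]
      have : 0 ≤ ∑ j ∈ Finset.univ.erase i, β i j :=
        Finset.sum_nonneg fun j _ => (hβ i j).1
      linarith
    rw [hsplit, hSval]
    rcases le_or_gt 0 (1 - a + s i * β i i) with hpos | hneg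
    · rw [abs_of_nonneg hpos]
      nlinarith [mul_nonneg (sub_nonneg.2 hs1) (hRbii.trans (by linarith : R - β i i ≤ R - β i i + β i i - β i i + β i i))]
    · rw [abs_of_neg hneg]
      rcases le_or_gt 0 (R - 2 * β i i) with ht | ht
      · nlinarith [mul_nonneg (sub_nonneg.2 hs1) ht]
      · nlinarith [mul_nonneg hs0 (le_of_lt (neg_pos.2 ht))]
  unfold infNorm
  rcases isEmpty_or_nonempty (Fin n) with h | h
  · rw [iSup_of_empty']
    simp [Real.sSup_empty]
  · obtain ⟨i, hi⟩ := Finite.exists_max fun i => ∑ j, |M i j|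
    exact lt_of_le_of_lt (ciSup_le hi) (key i)
end

section
/- Limit of the vigilant states under epidemic eradication: assume additionally that θ_i and γ_i are continuous on [0,1] and that θ_i(o) + γ_i(o) ≤ 2 − c for all o ∈ [0,1] and all i. If a trajectory of the coupled SIV-opinion model satisfying the standing assumptions has x^I(k) → 0 as k → ∞, then x_i^V(k) → θ_i(0)/(θ_i(0) + γ_i(0)) for every i ∈ {1,…,n}. -/
/-!
The state stays in the box `x^I, x^V ≥ 0`, `x^I + x^V ≤ 1`, `o ∈ [0,1]`. Since the opinion
update `o ↦ o + (1 - o)(u - o)` never exceeds the largest opinion `M(k)`, that maximum obeys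
`M(k+1) ≤ (1 - min φ) M(k) + ∑ x^I(k)`, so `M → 0` once `x^I → 0`; by continuity
`θ_i(o_i) → θ_i(0)` and `γ_i(o_i) → γ_i(0)`. Finally `e = x_i^V - θ_i(0)/(θ_i(0)+γ_i(0))`
obeys `e(k+1) = (1 - θ_i(o_i) - γ_i(o_i)) e(k) + ε(k)` with `ε → 0`, and `c ≤ θ + γ ≤ 2 - c`
makes the factor a contraction of ratio `1 - c`.
-/

open Filter Topology Finset

theorem tendsto_zero_of_le_mul_add {a ε : ℕ → ℝ} {r : ℝ} (hr0 : 0 ≤ r) (hr1 : r < 1)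
    (ha : ∀ k, 0 ≤ a k) (hrec : ∀ k, a (k + 1) ≤ r * a k + ε k)
    (hε : Tendsto ε atTop (𝓝 0)) : Tendsto a atTop (𝓝 0) := by
  refine tendsto_order.2 ⟨fun b hb => Eventually.of_forall fun k => hb.trans_le (ha k),
    fun η hη => ?_⟩
  obtain ⟨N, hN⟩ := eventually_atTop.1
    (hε.eventually (gt_mem_nhds (show 0 < (1 - r) * (η / 2) by nlinarith)))
  -- Once `ε < (1 - r) η / 2`, the excess of `a` over `η / 2` decays geometrically.
  have hgeom : ∀ m, a (N + m) - η / 2 ≤ r ^ m * (a N - η / 2) := by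
    intro m
    induction m with
    | zero => simp
    | succ m ih =>
      calc a (N + m + 1) - η / 2 ≤ r * (a (N + m) - η / 2) := by
            linarith [hrec (N + m), hN (N + m) le_self_add]
        _ ≤ r * (r ^ m * (a N - η / 2)) := mul_le_mul_of_nonneg_left ih hr0
        _ = r ^ (m + 1) * (a N - η / 2) := by ring
  have hpow : Tendsto (fun m => r ^ m * (a N - η / 2)) atTop (𝓝 0) := by
    simpa using (tendsto_pow_atTop_nhds_zero_of_lt_one hr0 hr1).mul_const (a N - η / 2)
  obtain ⟨M, hM⟩ := eventually_atTop.1 (hpow.eventually (gt_mem_nhds (half_pos hη)))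
  filter_upwards [eventually_ge_atTop (N + M)] with k hk
  obtain ⟨m, rfl⟩ := Nat.exists_eq_add_of_le (le_self_add.trans hk)
  linarith [hgeom m, hM m (by omega)]

section Weights

variable {ι : Type*} [Fintype ι] {w x : ι → ℝ}

theorem sum_mul_mem_Icc {M : ℝ} (hw : ∀ j, 0 ≤ w j)
    (hx : ∀ j, x j ∈ Set.Icc 0 M) : ∑ j, w j * x j ∈ Set.Icc 0 ((∑ j, w j) * M) := by
  refine ⟨sum_nonneg fun j _ => mul_nonneg (hw j) (hx j).1, ?_⟩
  rw [sum_mul]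
  exact sum_le_sum fun j _ => mul_le_mul_of_nonneg_left (hx j).2 (hw j)

theorem sum_mul_sub_const (hw : ∑ j, w j = 1) (y : ℝ) :
    ∑ j, w j * (x j - y) = ∑ j, w j * x j - y := by
  simp only [mul_sub, sum_sub_distrib, ← sum_mul, hw, one_mul]

end Weights

theorem opinion_update_mem_Icc {o u M : ℝ} (ho : o ∈ Set.Icc 0 1) (hu : u ∈ Set.Icc 0 M)
    (hoM : o ≤ M) : o + (1 - o) * (u - o) ∈ Set.Icc 0 M := by
  obtain ⟨ho0, ho1⟩ := ho
  constructor
  · nlinarith [mul_nonneg (sub_nonneg.2 ho1) hu.1]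
  · nlinarith [mul_nonneg (sub_nonneg.2 ho1) (sub_nonneg.2 hu.2),
      mul_nonneg ho0 (sub_nonneg.2 hoM)]

theorem epidemic_step_mem {xI xV s δ θ γ : ℝ} (hI : 0 ≤ xI) (hV : 0 ≤ xV)
    (hIV : xI + xV ≤ 1) (hs : 0 ≤ s) (hsθ : s + θ ≤ 1) (hδ : δ ∈ Set.Icc 0 1) (hθ : 0 ≤ θ)
    (hγ : γ ∈ Set.Icc 0 1) :
    0 ≤ xI - δ * xI + (1 - xI - xV) * s ∧
      0 ≤ xV + δ * xI - γ * xV + θ * (1 - xI - xV) ∧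
      (xI - δ * xI + (1 - xI - xV) * s) + (xV + δ * xI - γ * xV + θ * (1 - xI - xV)) ≤ 1 := by
  have hS : 0 ≤ 1 - xI - xV := by linarith
  refine ⟨?_, ?_, ?_⟩
  · nlinarith [mul_nonneg hI (sub_nonneg.2 hδ.2), mul_nonneg hS hs]
  · nlinarith [mul_nonneg hV (sub_nonneg.2 hγ.2), mul_nonneg hδ.1 hI, mul_nonneg hθ hS]
  · nlinarith [mul_nonneg hS (show 0 ≤ 1 - s - θ by linarith), mul_nonneg hγ.1 hV]

section Model

variable {ι : Type*} [Fintype ι] {δ φ : ι → ℝ} {β w : ι → ι → ℝ} {θ γ : ι → ℝ → ℝ}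
  {xI xV o : ℕ → ι → ℝ}

theorem siv_opinion_invariant (hδ : ∀ i, δ i ∈ Set.Icc 0 1) (hβ : ∀ i j, 0 ≤ β i j)
    (hθ : ∀ i, ∀ o' ∈ Set.Icc (0 : ℝ) 1, 0 ≤ θ i o')
    (hγ : ∀ i, ∀ o' ∈ Set.Icc (0 : ℝ) 1, γ i o' ∈ Set.Icc 0 1)
    (hβθ : ∀ i, ∀ o' ∈ Set.Icc (0 : ℝ) 1, (∑ j, β i j) + θ i o' ≤ 1)
    (hφ : ∀ i, φ i ∈ Set.Icc 0 1) (hw : ∀ i j, 0 ≤ w i j) (hwrow : ∀ i, ∑ j, w i j = 1)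
    (hI : ∀ k i, xI (k + 1) i =
      xI k i - δ i * xI k i + (1 - xI k i - xV k i) * ∑ j, β i j * xI k j)
    (hV : ∀ k i, xV (k + 1) i =
      xV k i + δ i * xI k i - γ i (o k i) * xV k i
        + θ i (o k i) * (1 - xI k i - xV k i))
    (hO : ∀ k i, o (k + 1) i =
      φ i * xI k i + (1 - φ i) * (o k i + (1 - o k i) * ∑ j, w i j * (o k j - o k i)))
    (h0 : ∀ i, 0 ≤ xI 0 i ∧ 0 ≤ xV 0 i ∧ xI 0 i + xV 0 i ≤ 1 ∧ o 0 i ∈ Set.Icc 0 1) :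
    ∀ k i, 0 ≤ xI k i ∧ 0 ≤ xV k i ∧ xI k i + xV k i ≤ 1 ∧ o k i ∈ Set.Icc 0 1 := by
  intro k
  induction k with
  | zero => exact h0
  | succ k ih =>
    intro i
    obtain ⟨hIi, hVi, hIVi, hoi⟩ := ih i
    have hs := sum_mul_mem_Icc (M := 1) (hβ i) fun j => ⟨(ih j).1, by linarith [ih j]⟩
    have hu := sum_mul_mem_Icc (M := 1) (hw i) fun j => (ih j).2.2.2
    rw [hwrow i, one_mul] at hu
    obtain ⟨hI', hV', hIV'⟩ := epidemic_step_mem hIi hVi hIVi hs.1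
      (by linarith [hs.2, hβθ i _ hoi]) (hδ i) (hθ i _ hoi) (hγ i _ hoi)
    have hf := opinion_update_mem_Icc hoi hu hoi.2
    rw [← sum_mul_sub_const (hwrow i)] at hf
    have ho' := convex_Icc (0 : ℝ) 1 ⟨hIi, by linarith⟩ hf (hφ i).1 (sub_nonneg.2 (hφ i).2)
      (add_sub_cancel _ _)
    simp only [smul_eq_mul] at ho'
    rw [hI, hV, hO]
    exact ⟨hI', hV', hIV', ho'⟩

theorem tendsto_opinion_zero (hφ : ∀ i, φ i ∈ Set.Ioc 0 1) (hw : ∀ i j, 0 ≤ w i j)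
    (hwrow : ∀ i, ∑ j, w i j = 1)
    (hO : ∀ k i, o (k + 1) i =
      φ i * xI k i + (1 - φ i) * (o k i + (1 - o k i) * ∑ j, w i j * (o k j - o k i)))
    (hI : ∀ k i, 0 ≤ xI k i) (ho : ∀ k i, o k i ∈ Set.Icc 0 1)
    (hconv : ∀ i, Tendsto (fun k => xI k i) atTop (𝓝 0)) (i : ι) :
    Tendsto (fun k => o k i) atTop (𝓝 0) := by
  have : Nonempty ι := ⟨i⟩
  obtain ⟨j₀, hj₀⟩ := Finite.exists_min φ
  set M : ℕ → ℝ := fun k => univ.sup' univ_nonempty (o k)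
  have hoM : ∀ k j, o k j ≤ M k := fun k j => le_sup' (o k) (mem_univ j)
  have hMrec : ∀ k, M (k + 1) ≤ (1 - φ j₀) * M k + ∑ j, xI k j := by
    intro k
    refine sup'_le _ _ fun j _ => ?_
    have hu := sum_mul_mem_Icc (hw j) fun l => ⟨(ho k l).1, hoM k l⟩
    rw [hwrow j, one_mul] at hu
    have hf := opinion_update_mem_Icc (ho k j) hu (hoM k j)
    rw [← sum_mul_sub_const (hwrow j)] at hf
    have hIj : φ j * xI k j ≤ ∑ l, xI k l :=
      (mul_le_of_le_one_left (hI k j) (hφ j).2).trans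
        (single_le_sum (fun l _ => hI k l) (mem_univ j))
    rw [hO]
    nlinarith [mul_le_mul (sub_le_sub_left (hj₀ j) 1) hf.2 hf.1 (sub_nonneg.2 (hφ j₀).2)]
  have hsum : Tendsto (fun k => ∑ j, xI k j) atTop (𝓝 0) := by
    simpa using tendsto_finsetSum univ fun j _ => hconv j
  have hM := tendsto_zero_of_le_mul_add (sub_nonneg.2 (hφ j₀).2) (sub_lt_self 1 (hφ j₀).1)
    (fun k => (ho k i).1.trans (hoM k i)) hMrec hsum
  exact squeeze_zero (fun k => (ho k i).1) (fun k => hoM k i) hM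

end Model

theorem tendsto_vigilant {v x a b : ℕ → ℝ} {δ a₀ b₀ c : ℝ} (hc : 0 < c)
    (hv : ∀ k, v (k + 1) = v k + δ * x k - b k * v k + a k * (1 - x k - v k))
    (hab : ∀ k, c ≤ a k + b k ∧ a k + b k ≤ 2 - c)
    (ha : Tendsto a atTop (𝓝 a₀)) (hb : Tendsto b atTop (𝓝 b₀)) (hx : Tendsto x atTop (𝓝 0)) :
    Tendsto v atTop (𝓝 (a₀ / (a₀ + b₀))) := by
  set L := a₀ / (a₀ + b₀)
  have hL : (a₀ + b₀) * L = a₀ := by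
    have : c ≤ a₀ + b₀ := ge_of_tendsto' (ha.add hb) fun k => (hab k).1
    exact mul_div_cancel₀ a₀ (hc.trans_le this).ne'
  set ε : ℕ → ℝ := fun k => a k - (a k + b k) * L + (δ - a k) * x k
  have hε : Tendsto ε atTop (𝓝 0) := by
    have := (ha.sub ((ha.add hb).mul_const L)).add
      (((tendsto_const_nhds (x := δ)).sub ha).mul hx)
    rwa [hL, sub_self, mul_zero, add_zero] at this
  have hstep : ∀ k, |v (k + 1) - L| ≤ (1 - c) * |v k - L| + |ε k| := by
    intro k
    have hcontr : |1 - a k - b k| ≤ 1 - c := abs_le.2 ⟨by linarith [hab k], by linarith [hab k]⟩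
    calc |v (k + 1) - L| = |(1 - a k - b k) * (v k - L) + ε k| := by
          rw [hv]; congr 1; simp only [ε]; ring
      _ ≤ |1 - a k - b k| * |v k - L| + |ε k| := by rw [← abs_mul]; exact abs_add_le _ _
      _ ≤ (1 - c) * |v k - L| + |ε k| := by gcongr
  have hc1 : c ≤ 1 := by linarith [hab 0]
  have he := tendsto_zero_of_le_mul_add (a := fun k => |v k - L|) (sub_nonneg.2 hc1)
    (sub_lt_self 1 hc) (fun k => abs_nonneg _) hstep (by simpa using hε.abs)
  simpa using (tendsto_zero_iff_abs_tendsto_zero _).2 he |>.add_const L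

/-- **Limit of the vigilant states under epidemic eradication.**
Assume `θ_i, γ_i` are continuous on `[0,1]` and `θ_i(o) + γ_i(o) ≤ 2 − c`.
If a trajectory of the coupled SIV-opinion model (with the standing
assumptions) satisfies `x^I(k) → 0`, then
`x_i^V(k) → θ_i(0)/(θ_i(0) + γ_i(0))` for every `i`. -/
theorem vigilant_limit_of_eradication {n : ℕ} (c : ℝ)
    (hc : c ∈ Set.Ioo (0:ℝ) 1)
    (δ φ : Fin n → ℝ) (β w : Fin n → Fin n → ℝ)
    (θ γ : Fin n → ℝ → ℝ)
    (hδ : ∀ i, δ i ∈ Set.Icc (0:ℝ) 1)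
    (hβ : ∀ i j, β i j ∈ Set.Icc (0:ℝ) 1)
    (hθ : ∀ i, ∀ o' ∈ Set.Icc (0:ℝ) 1, θ i o' ∈ Set.Icc (0:ℝ) 1)
    (hγ : ∀ i, ∀ o' ∈ Set.Icc (0:ℝ) 1, γ i o' ∈ Set.Icc (0:ℝ) 1)
    (hβθ : ∀ i, ∀ o' ∈ Set.Icc (0:ℝ) 1, (∑ j, β i j) + θ i o' ≤ 1)
    (hθγ : ∀ i, ∀ o' ∈ Set.Icc (0:ℝ) 1, c ≤ θ i o' + γ i o')
    (hθγ' : ∀ i, ∀ o' ∈ Set.Icc (0:ℝ) 1, θ i o' + γ i o' ≤ 2 - c)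
    (hθcont : ∀ i, ContinuousOn (θ i) (Set.Icc (0:ℝ) 1))
    (hγcont : ∀ i, ContinuousOn (γ i) (Set.Icc (0:ℝ) 1))
    (hφ : ∀ i, φ i ∈ Set.Ioo (0:ℝ) 1)
    (hw : ∀ i j, 0 ≤ w i j) (hwrow : ∀ i, ∑ j, w i j = 1)
    (xI xV o : ℕ → Fin n → ℝ)
    (hI : ∀ k i, xI (k+1) i =
      xI k i - δ i * xI k i + (1 - xI k i - xV k i) * ∑ j, β i j * xI k j)
    (hV : ∀ k i, xV (k+1) i =
      xV k i + δ i * xI k i - γ i (o k i) * xV k i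
        + θ i (o k i) * (1 - xI k i - xV k i))
    (hO : ∀ k i, o (k+1) i =
      φ i * xI k i + (1 - φ i) * (o k i + (1 - o k i) * ∑ j, w i j * (o k j - o k i)))
    (hI0 : ∀ i, xI 0 i ∈ Set.Icc (0:ℝ) 1)
    (hV0 : ∀ i, xV 0 i ∈ Set.Icc (0:ℝ) 1)
    (hO0 : ∀ i, o 0 i ∈ Set.Icc (0:ℝ) 1)
    (hIV0 : ∀ i, xI 0 i + xV 0 i ≤ 1)
    (hconv : Tendsto (fun k => xI k) atTop (nhds 0)) :
    ∀ i, Tendsto (fun k => xV k i) atTop (nhds (θ i 0 / (θ i 0 + γ i 0))) := by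
  have hbox := siv_opinion_invariant hδ (fun i j => (hβ i j).1) (fun i o' ho' => (hθ i o' ho').1) hγ
    hβθ (fun i => Set.Ioo_subset_Icc_self (hφ i)) hw hwrow hI hV hO
    fun i => ⟨(hI0 i).1, (hV0 i).1, hIV0 i, hO0 i⟩
  have hIi : ∀ j, Tendsto (fun k => xI k j) atTop (𝓝 0) := tendsto_pi_nhds.1 hconv
  intro i
  have hoi : Tendsto (fun k => o k i) atTop (𝓝[Set.Icc 0 1] 0) :=
    tendsto_nhdsWithin_iff.2 ⟨tendsto_opinion_zero (fun j => Set.Ioo_subset_Ioc_self (hφ j))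
      hw hwrow hO (fun k j => (hbox k j).1) (fun k j => (hbox k j).2.2.2) hIi i,
      Eventually.of_forall fun k => (hbox k i).2.2.2⟩
  have h0 : (0 : ℝ) ∈ Set.Icc 0 1 := ⟨le_rfl, zero_le_one⟩
  exact tendsto_vigilant hc.1 (hV · i)
    (fun k => ⟨hθγ i _ (hbox k i).2.2.2, hθγ' i _ (hbox k i).2.2.2⟩)
    ((hθcont i 0 h0).tendsto.comp hoi) ((hγcont i 0 h0).tendsto.comp hoi) (hIi i)
end
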